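/- Let 𝕂 be ℝ or ℂ, r ≥ 1, and let V be a 𝕂-vector space with dim V ≥ r. Then every left ideal 𝔩 ⊆ 𝕂[S_r] (a 𝕂-subspace closed under left multiplication by elements of 𝕂[S_r]) satisfies 𝔩 = span_𝕂 { T_b : T an r-linear map V^r → 𝕂 such that T_{b'} ∈ 𝔩 for all b' ∈ V^r, and b ∈ V^r }. -/

import Mathlib

/-!
Let `𝕂[S_r]` act on the right of `r`-linear forms by `T · p = T(· ∘ p⁻¹)`. Then `T ↦ T_b` is
`𝕂[S_r]`-equivariant: `(T · x)_b = T_b * x`. Since `dim V ≥ r` there are vectors `e_j` and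
functionals `f_i` with `f_i(e_j) = δ_ij`, and the product form `P(v) = ∏ f_i(v_i)` has
`P_e = 1`. So each `x ∈ 𝔩` equals `(P · x)_e`, while every `(P · x)_{b'} = P_{b'} * x` lies in
the left ideal `𝔩`.
-/

/-- The group algebra element `T_b = Σ_{p∈S_r} T(v_{p(1)},…,v_{p(r)})·p` induced by an
`r`-linear map `T` and an `r`-tuple `b = (v₁,…,v_r)`. -/
noncomputable def tb {𝕂 : Type*} [RCLike 𝕂] {V : Type*} [AddCommGroup V] [Module 𝕂 V]
    {r : ℕ} (T : MultilinearMap 𝕂 (fun _ : Fin r => V) 𝕂) (b : Fin r → V) :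
    MonoidAlgebra 𝕂 (Equiv.Perm (Fin r)) :=
  ∑ p : Equiv.Perm (Fin r), MonoidAlgebra.single p (T (b ∘ p))

open MonoidAlgebra

theorem exists_dual_biorthogonal_of_le_rank {K V : Type*} [Field K] [AddCommGroup V]
    [Module K V] {n : ℕ} (hn : n ≤ Module.rank K V) :
    ∃ (e : Fin n → V) (f : Fin n → Module.Dual K V),
      ∀ i j, f i (e j) = if i = j then 1 else 0 := by
  obtain ⟨e, he⟩ := exists_linearIndependent_of_le_rank hn
  obtain ⟨g, hg⟩ := (Fintype.linearCombination K e).exists_leftInverse_of_injective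
    (LinearMap.ker_eq_bot.mpr he.fintypeLinearCombination_injective)
  refine ⟨e, fun i => LinearMap.proj i ∘ₗ g, fun i j => ?_⟩
  have hge : g (e j) = Pi.single j 1 := by
    simpa using LinearMap.congr_fun hg (Pi.single j 1)
  simp [hge, Pi.single_apply]

namespace MultilinearMap

variable {K V ι : Type*} [CommSemiring K] [AddCommMonoid V] [Module K V]

noncomputable def rightAct (T : MultilinearMap K (fun _ : ι => V) K)
    (x : MonoidAlgebra K (Equiv.Perm ι)) : MultilinearMap K (fun _ : ι => V) K :=
  x.coeff.sum fun q c => c • T.domDomCongr q⁻¹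

end MultilinearMap

section tb

variable {𝕂 V : Type*} [RCLike 𝕂] [AddCommGroup V] [Module 𝕂 V] {r : ℕ}

theorem coeff_tb (T : MultilinearMap 𝕂 (fun _ : Fin r => V) 𝕂) (b : Fin r → V)
    (p : Equiv.Perm (Fin r)) : (tb T b).coeff p = T (b ∘ p) := by
  simp [tb, coeff_sum, coeff_single, Finsupp.single_apply]

theorem tb_rightAct (T : MultilinearMap 𝕂 (fun _ : Fin r => V) 𝕂) (b : Fin r → V)
    (x : MonoidAlgebra 𝕂 (Equiv.Perm (Fin r))) : tb (T.rightAct x) b = tb T b * x := by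
  ext p
  rw [coeff_tb, coeff_mul_apply_right, MultilinearMap.rightAct, Finsupp.sum, Finsupp.sum,
    sum_apply]
  simp [coeff_tb, mul_comm, Function.comp_def]

theorem tb_compLinearMap_of_biorthogonal {f : Fin r → Module.Dual 𝕂 V} {e : Fin r → V}
    (hfe : ∀ i j, f i (e j) = if i = j then 1 else 0) :
    tb ((MultilinearMap.mkPiAlgebra 𝕂 (Fin r) 𝕂).compLinearMap f) e = 1 := by
  ext p
  rw [coeff_tb, one_def, coeff_single]
  by_cases hp : p = 1
  · simp [hp, hfe]
  · obtain ⟨i, hi⟩ : ∃ i, p i ≠ i := by simpa [Equiv.Perm.ext_iff] using hp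
    simp only [MultilinearMap.compLinearMap_apply, MultilinearMap.mkPiAlgebra_apply,
      Function.comp_apply, Finsupp.single_apply, Ne.symm hp, if_false]
    exact Finset.prod_eq_zero (Finset.mem_univ i) (by simp [hfe, Ne.symm hi])

end tb

theorem stmt10 {𝕂 : Type*} [RCLike 𝕂] {V : Type*} [AddCommGroup V] [Module 𝕂 V]
    {r : ℕ} (hdim : (r : Cardinal) ≤ Module.rank 𝕂 V)
    (𝔩 : Submodule 𝕂 (MonoidAlgebra 𝕂 (Equiv.Perm (Fin r))))
    (hideal : ∀ x ∈ 𝔩, ∀ y : MonoidAlgebra 𝕂 (Equiv.Perm (Fin r)), y * x ∈ 𝔩) :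
    𝔩 = Submodule.span 𝕂
      {x : MonoidAlgebra 𝕂 (Equiv.Perm (Fin r)) |
        ∃ (T : MultilinearMap 𝕂 (fun _ : Fin r => V) 𝕂) (b : Fin r → V),
          (∀ b' : Fin r → V, tb T b' ∈ 𝔩) ∧ x = tb T b} := by
  obtain ⟨e, f, hfe⟩ := exists_dual_biorthogonal_of_le_rank hdim
  set P := (MultilinearMap.mkPiAlgebra 𝕂 (Fin r) 𝕂).compLinearMap f
  refine le_antisymm (fun x hx => ?_) ?_
  · refine Submodule.subset_span ⟨P.rightAct x, e, fun b' => ?_, ?_⟩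
    · rw [tb_rightAct]
      exact hideal x hx _
    · rw [tb_rightAct, tb_compLinearMap_of_biorthogonal hfe, one_mul]
  · rw [Submodule.span_le]
    rintro _ ⟨T, b, hT, rfl⟩
    exact hT b
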